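/- Let (X, μ) be a probability space with X a standard Borel space, let z : X → ℝ be measurable with ∫ z(x)² dμ(x) < ∞, let v > 0 and λ ∈ [0, 1], and let κ_λ be the Markov kernel from X to ℝ given by κ_λ(x) = N(λ·z(x), v). Then the mutual information between x ∼ μ and the bottleneck output z̃(λ), namely D_KL(μ ⊗ₘ κ_λ ‖ μ × (κ_λ∘μ)), is at most λ²/(2v) · ∫ z(x)² dμ(x). -/

import Mathlib

open MeasureTheory ProbabilityTheory Real Filter
open scoped ENNReal NNReal ProbabilityTheory

namespace NIBAux

variable {v : ℝ≥0}

lemma integrable_id_gaussianReal_zero (hv : v ≠ 0) :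
    Integrable (fun y : ℝ ↦ y) (gaussianReal 0 v) := by
  have hv' : (0:ℝ) < v := lt_of_le_of_ne v.coe_nonneg (by exact_mod_cast hv.symm)
  rw [gaussianReal_of_var_ne_zero _ hv,
    integrable_withDensity_iff (measurable_gaussianPDF 0 v)
      (ae_of_all _ fun _ ↦ ENNReal.ofReal_lt_top)]
  have heq : (fun y : ℝ ↦ y * (gaussianPDF 0 v y).toReal)
      = fun y ↦ (Real.sqrt (2 * π * v))⁻¹ * (y * rexp (-(2 * (v:ℝ))⁻¹ * y ^ 2)) := by
    funext y
    rw [gaussianPDF, ENNReal.toReal_ofReal (gaussianPDFReal_nonneg _ _ _), gaussianPDFReal,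
      sub_zero, show -y ^ 2 / (2 * (v:ℝ)) = -(2 * (v:ℝ))⁻¹ * y ^ 2 by
        rw [div_eq_mul_inv]; ring]
    ring
  rw [heq]
  exact (integrable_mul_exp_neg_mul_sq (by positivity)).const_mul _

lemma gaussianReal_eq_map (m : ℝ) (v : ℝ≥0) :
    gaussianReal m v = (gaussianReal 0 v).map (· + m) := by
  rw [gaussianReal_map_add_const m, zero_add]

lemma integrable_id_gaussianReal (hv : v ≠ 0) (m : ℝ) :
    Integrable (fun y : ℝ ↦ y) (gaussianReal m v) := by
  rw [gaussianReal_eq_map m v,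
    integrable_map_measure (g := fun y : ℝ ↦ y)
      measurable_id.aestronglyMeasurable
      (f := fun y : ℝ ↦ y + m) (measurable_id.add_const m).aemeasurable]
  simpa [Function.comp_def] using (integrable_id_gaussianReal_zero hv).add (integrable_const m)

lemma integral_id_gaussianReal_zero (hv : v ≠ 0) : ∫ y, y ∂(gaussianReal 0 v) = 0 := by
  have hmap : (gaussianReal 0 v).map (fun y : ℝ ↦ -y) = gaussianReal 0 v := by
    have h := gaussianReal_map_const_mul (μ := 0) (v := v) (-1)
    have h1 : (⟨(-1:ℝ)^2, sq_nonneg _⟩ : ℝ≥0) = 1 := by ext; norm_num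
    rw [mul_zero] at h
    rw [show (fun y : ℝ ↦ -y) = fun x ↦ -1 * x by funext x; ring, h]
    congr 1; ext; simp
  have h2 : ∫ y, y ∂(gaussianReal 0 v) = ∫ y, -y ∂(gaussianReal 0 v) := by
    conv_lhs => rw [← hmap]
    rw [integral_map (φ := fun y : ℝ ↦ -y) (f := fun y : ℝ ↦ y)
      measurable_neg.aemeasurable measurable_id.aestronglyMeasurable]
  rw [integral_neg] at h2; linarith

lemma integral_id_gaussianReal (hv : v ≠ 0) (m : ℝ) :
    ∫ y, y ∂(gaussianReal m v) = m := by
  rw [gaussianReal_eq_map m v,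
    integral_map (φ := fun y : ℝ ↦ y + m) (f := fun y : ℝ ↦ y)
      (measurable_id.add_const m).aemeasurable measurable_id.aestronglyMeasurable]
  rw [integral_add (integrable_id_gaussianReal_zero hv) (integrable_const m),
    integral_id_gaussianReal_zero hv, integral_const]
  simp

lemma integral_abs_gaussianReal_le (hv : v ≠ 0) (m : ℝ) :
    ∫ y, |y| ∂(gaussianReal m v) ≤ (∫ y, |y| ∂(gaussianReal 0 v)) + |m| := by
  rw [gaussianReal_eq_map m v,
    integral_map (φ := fun y : ℝ ↦ y + m) (f := fun y : ℝ ↦ |y|)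
      (measurable_id.add_const m).aemeasurable measurable_abs.aestronglyMeasurable]
  have hle : ∫ y, |y + m| ∂(gaussianReal 0 v) ≤ ∫ y, (|y| + |m|) ∂(gaussianReal 0 v) := by
    refine integral_mono (((integrable_id_gaussianReal_zero hv).add
      (integrable_const m)).abs) (((integrable_id_gaussianReal_zero hv).abs).add
      (integrable_const |m|)) fun y ↦ abs_add_le _ _
  calc ∫ y, |y + m| ∂(gaussianReal 0 v) ≤ _ := hle
  _ = (∫ y, |y| ∂(gaussianReal 0 v)) + |m| := by
      rw [integral_add ((integrable_id_gaussianReal_zero hv).abs) (integrable_const |m|),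
        integral_const]
      simp

lemma gaussianReal_withDensity (hv : v ≠ 0) (m : ℝ) :
    gaussianReal m v = (gaussianReal 0 v).withDensity
      (fun y ↦ ENNReal.ofReal (rexp (m * y / v - m ^ 2 / (2 * v)))) := by
  have hv' : (0:ℝ) < v := lt_of_le_of_ne v.coe_nonneg (by exact_mod_cast hv.symm)
  rw [gaussianReal_of_var_ne_zero _ hv, gaussianReal_of_var_ne_zero _ hv, ←
    withDensity_mul _ (measurable_gaussianPDF 0 v)
      (by fun_prop : Measurable fun y : ℝ ↦ ENNReal.ofReal (rexp (m * y / ↑v - m ^ 2 / (2 * ↑v))))]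
  congr 1
  funext y
  rw [Pi.mul_apply, gaussianPDF, gaussianPDF,
    ← ENNReal.ofReal_mul (gaussianPDFReal_nonneg _ _ _)]
  congr 1
  rw [gaussianPDFReal, gaussianPDFReal, sub_zero,
    mul_assoc (Real.sqrt (2 * π * (v:ℝ)))⁻¹, ← Real.exp_add]
  congr 2
  field_simp
  ring



lemma withDensity_prod_apply {X : Type*} {Y : Type*} [MeasurableSpace X] [MeasurableSpace Y]
    (μ : Measure X) [SFinite μ] (ν : Measure Y) [SigmaFinite ν]
    {w : X × Y → ℝ≥0∞} (hw : Measurable w) {s : Set (X × Y)} (hs : MeasurableSet s) :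
    ((μ.prod ν).withDensity w) s = ∫⁻ x, ∫⁻ y in Prod.mk x ⁻¹' s, w (x, y) ∂ν ∂μ := by
  rw [withDensity_apply _ hs, ← lintegral_indicator hs,
    MeasureTheory.lintegral_prod _ ((hw.indicator hs).aemeasurable)]
  refine lintegral_congr fun x ↦ ?_
  rw [← lintegral_indicator (measurable_prodMk_left hs)]
  rfl

end NIBAux

open scoped Classical in
/-- Kullback–Leibler divergence: `∫ log (dP/dQ) dP` when `P ≪ Q` (and the integral makes
sense), `+∞` otherwise. -/
noncomputable def klDiv {α : Type*} [MeasurableSpace α] (P Q : Measure α) : ℝ≥0∞ :=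
  if P ≪ Q ∧ Integrable (llr P Q) P then ENNReal.ofReal (∫ x, llr P Q x ∂P) else ⊤
theorem mutualInfo_gaussian_bottleneck_le
    {X : Type*} [MeasurableSpace X] [StandardBorelSpace X]
    (μ : Measure X) [IsProbabilityMeasure μ]
    (z : X → ℝ) (hz : Measurable z) (hint : Integrable (fun x ↦ z x ^ 2) μ)
    (v : ℝ≥0) (hv : 0 < v) (l : ℝ) (h₀ : 0 ≤ l) (h₁ : l ≤ 1)
    (κ : ProbabilityTheory.Kernel X ℝ) [ProbabilityTheory.IsMarkovKernel κ]
    (hκ : ∀ x, κ x = gaussianReal (l * z x) v) :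
    klDiv (μ ⊗ₘ κ) (μ.prod ((μ ⊗ₘ κ).snd))
      ≤ ENNReal.ofReal (l ^ 2 / (2 * (v : ℝ)) * ∫ x, z x ^ 2 ∂μ) := by
  have hv0 : v ≠ 0 := hv.ne'
  have hv' : (0:ℝ) < v := hv
  set ν : Measure ℝ := gaussianReal 0 v with hν
  set m : X → ℝ := fun x ↦ l * z x with hm_def
  have hm : Measurable m := measurable_const.mul hz
  set φ : X × ℝ → ℝ := fun p ↦ m p.1 * p.2 / v - m p.1 ^ 2 / (2 * v) with hφ_def
  have hφ : Measurable φ := by fun_prop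
  set g : X × ℝ → ℝ≥0∞ := fun p ↦ ENNReal.ofReal (rexp (φ p)) with hg_def
  have hg : Measurable g := by fun_prop
  have hκν : ∀ x, κ x = ν.withDensity fun y ↦ g (x, y) := by
    intro x
    rw [hκ x, NIBAux.gaussianReal_withDensity hv0 (l * z x)]
  set P : Measure (X × ℝ) := μ ⊗ₘ κ with hP
  set M : Measure ℝ := P.snd with hM
  have hMprob : IsProbabilityMeasure M := by
    constructor
    rw [hM, Measure.snd_univ]
    exact measure_univ
  have hPeq : P = (μ.prod ν).withDensity g := by
    ext s hs
    rw [hP, Measure.compProd_apply hs, NIBAux.withDensity_prod_apply μ ν hg hs]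
    refine lintegral_congr fun x ↦ ?_
    rw [hκν x, withDensity_apply _ (measurable_prodMk_left hs)]
  set G : ℝ → ℝ≥0∞ := fun y ↦ ∫⁻ x, g (x, y) ∂μ with hG_def
  have hG : Measurable G := hg.lintegral_prod_left'
  have hMG : M = ν.withDensity G := by
    ext s hs
    rw [hM, Measure.snd_apply hs, hPeq,
      NIBAux.withDensity_prod_apply μ ν hg (measurable_snd hs)]
    have hpre : ∀ x : X, Prod.mk x ⁻¹' (Prod.snd ⁻¹' s) = s := fun _ ↦ rfl
    simp_rw [hpre]
    rw [withDensity_apply _ hs]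
    exact lintegral_lintegral_swap hg.aemeasurable
  have hprodM : μ.prod M = (μ.prod ν).withDensity fun p ↦ G p.2 := by
    ext s hs
    rw [Measure.prod_apply hs, NIBAux.withDensity_prod_apply μ ν (w := fun p ↦ G p.2) (hG.comp measurable_snd) hs]
    refine lintegral_congr fun x ↦ ?_
    rw [hMG, withDensity_apply _ (measurable_prodMk_left hs)]
  have hGpos : ∀ y, 0 < G y := by
    intro y
    rw [hG_def, pos_iff_ne_zero]
    intro h0
    have hmeas : Measurable fun x ↦ g (x, y) := hg.comp (measurable_id.prodMk measurable_const)
    rw [lintegral_eq_zero_iff hmeas] at h0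
    obtain ⟨x, hx⟩ := h0.exists
    exact absurd hx (ENNReal.ofReal_pos.mpr (Real.exp_pos _)).ne'
  have hPν : P ≪ μ.prod ν := hPeq ▸ withDensity_absolutelyContinuous _ _
  have hνM : μ.prod ν ≪ μ.prod M := hprodM ▸ withDensity_absolutelyContinuous'
    (hG.comp measurable_snd).aemeasurable (ae_of_all _ fun p ↦ (hGpos p.2).ne')
  have hPM : P ≪ μ.prod M := hPν.trans hνM
  have hMν : M ≪ ν := hMG ▸ withDensity_absolutelyContinuous _ _
  have hPrn : P.rnDeriv (μ.prod ν) =ᵐ[μ.prod ν] g := by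
    rw [hPeq]; exact Measure.rnDeriv_withDensity _ hg
  have hMrn : (μ.prod M).rnDeriv (μ.prod ν) =ᵐ[μ.prod ν] fun p ↦ G p.2 := by
    rw [hprodM]; exact Measure.rnDeriv_withDensity _ (hG.comp measurable_snd)
  have hchain := Measure.rnDeriv_mul_rnDeriv (κ := μ.prod ν) hPM
  have hGfin_ν : ∀ᵐ y ∂ν, G y < ∞ := by
    refine ae_lt_top hG ?_
    have h1 : ∫⁻ y, G y ∂ν = M Set.univ := by
      rw [hMG, withDensity_apply _ MeasurableSet.univ, Measure.restrict_univ]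
    rw [h1, measure_univ]
    exact ENNReal.one_ne_top
  have hsnd_prod : (μ.prod ν).map Prod.snd = ν := Measure.snd_prod
  have hGfin : ∀ᵐ p ∂(μ.prod ν), G p.2 < ∞ := by
    rw [← hsnd_prod] at hGfin_ν
    exact ae_of_ae_map measurable_snd.aemeasurable hGfin_ν
  have h1 : ∀ᵐ p ∂P, P.rnDeriv (μ.prod ν) p = g p := hPν.ae_eq hPrn
  have h2 : ∀ᵐ p ∂P, (μ.prod M).rnDeriv (μ.prod ν) p = G p.2 := hPν.ae_eq hMrn
  have h3 : ∀ᵐ p ∂P, P.rnDeriv (μ.prod M) p * (μ.prod M).rnDeriv (μ.prod ν) p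
      = P.rnDeriv (μ.prod ν) p := hPν.ae_eq hchain
  have h4 : ∀ᵐ p ∂P, G p.2 < ∞ := hGfin.filter_mono hPν.ae_le
  have hllr : llr P (μ.prod M) =ᵐ[P] fun p ↦ φ p - Real.log (G p.2).toReal := by
    filter_upwards [h1, h2, h3, h4] with p e1 e2 e3 e4
    have hGp : 0 < G p.2 := hGpos p.2
    have hrn : P.rnDeriv (μ.prod M) p = g p / G p.2 := by
      rw [e2, e1] at e3
      rw [← e3, mul_div_assoc, ENNReal.div_self hGp.ne' e4.ne, mul_one]
    rw [llr, hrn, ENNReal.toReal_div, hg_def, ENNReal.toReal_ofReal (Real.exp_pos _).le,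
      Real.log_div (Real.exp_pos _).ne' (ENNReal.toReal_pos hGp.ne' e4.ne).ne',
      Real.log_exp]
  have hu : llr P (μ.prod ν) =ᵐ[P] φ := by
    filter_upwards [h1] with p e1
    rw [llr, e1, hg_def, ENNReal.toReal_ofReal (Real.exp_pos _).le, Real.log_exp]
  -- integrability and integral of φ
  have hzabs : Integrable (fun x ↦ |z x|) μ := by
    refine (hint.add (integrable_const 1)).mono' hz.abs.aestronglyMeasurable
      (ae_of_all _ fun x ↦ ?_)
    rw [Real.norm_eq_abs, abs_abs]
    simp only [Pi.add_apply]
    nlinarith [sq_nonneg (|z x| - 1), sq_abs (z x)]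
  have hinner_int : ∀ x, Integrable (fun y ↦ φ (x, y)) (κ x) := by
    intro x
    have h1 : Integrable (fun y : ℝ ↦ m x * y / ↑v) (κ x) := by
      rw [hκ x]
      have := (NIBAux.integrable_id_gaussianReal hv0 (l * z x)).const_mul (m x / ↑v)
      refine this.congr (ae_of_all _ fun y ↦ ?_)
      ring
    have h2 := h1.sub (integrable_const (μ := κ x) (m x ^ 2 / (2 * ↑v)))
    exact h2.congr (ae_of_all _ fun y ↦ rfl)
  have hinner_val : ∀ x, ∫ y, φ (x, y) ∂(κ x) = m x ^ 2 / (2 * ↑v) := by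
    intro x
    have h1 : Integrable (fun y : ℝ ↦ m x * y / ↑v) (κ x) := by
      rw [hκ x]
      refine ((NIBAux.integrable_id_gaussianReal hv0 (l * z x)).const_mul
        (m x / ↑v)).congr (ae_of_all _ fun y ↦ ?_)
      ring
    have hsplit : ∫ y, φ (x, y) ∂(κ x)
        = (∫ y, m x * y / ↑v ∂(κ x)) - ∫ y, (m x ^ 2 / (2 * ↑v) : ℝ) ∂(κ x) :=
      integral_sub h1 (integrable_const (μ := κ x) (m x ^ 2 / (2 * ↑v)))
    rw [hsplit]
    have hval : ∫ y, m x * y / ↑v ∂(κ x) = m x / ↑v * m x := by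
      have hrw : (fun y : ℝ ↦ m x * y / ↑v) = fun y : ℝ ↦ m x / ↑v * y := by
        funext y; ring
      rw [hrw, integral_const_mul, hκ x, NIBAux.integral_id_gaussianReal hv0]
    have hmx : κ x Set.univ = 1 := by rw [hκ x]; exact measure_univ
    rw [hval, integral_const]
    rw [hκ x, probReal_univ]
    field_simp
    rw [one_smul, mul_div_assoc', mul_div_mul_left _ _ hv'.ne']; ring
  have habsmom : ∀ x, ∫ y, |y| ∂(κ x) ≤ (∫ y, |y| ∂ν) + |m x| := by
    intro x
    rw [hκ x]
    exact NIBAux.integral_abs_gaussianReal_le hv0 (l * z x)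
  have habsint : ∀ x, Integrable (fun y : ℝ ↦ |y|) (κ x) := by
    intro x
    rw [hκ x]
    exact (NIBAux.integrable_id_gaussianReal hv0 _).abs
  set A0 : ℝ := ∫ y, |y| ∂ν with hA0
  have hA0nonneg : 0 ≤ A0 := integral_nonneg fun y ↦ abs_nonneg y
  have hφint : Integrable φ P := by
    rw [hP, Measure.integrable_compProd_iff hφ.aestronglyMeasurable]
    refine ⟨ae_of_all _ hinner_int, ?_⟩
    refine Integrable.mono'
      (g := fun x ↦ ((|l| * A0 / ↑v) * |z x| + (l ^ 2 / ↑v) * |z x| ^ 2)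
        + (l ^ 2 / (2 * ↑v)) * |z x| ^ 2) ?_ ?_ (ae_of_all _ fun x ↦ ?_)
    · have hsq : Integrable (fun x ↦ |z x| ^ 2) μ :=
        hint.congr (ae_of_all _ fun x ↦ (sq_abs (z x)).symm)
      exact ((hzabs.const_mul _).add (hsq.const_mul _)).add (hsq.const_mul _)
    · exact (MeasureTheory.StronglyMeasurable.integral_kernel_prod_right'
        (hφ.norm.stronglyMeasurable)).aestronglyMeasurable
    · rw [Real.norm_eq_abs, abs_of_nonneg (integral_nonneg fun y ↦ norm_nonneg _)]
      have step1 : ∫ y, ‖φ (x, y)‖ ∂(κ x)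
          ≤ ∫ y, (|m x / ↑v| * |y| + m x ^ 2 / (2 * ↑v)) ∂(κ x) := by
        refine integral_mono (hinner_int x).norm
          (((habsint x).const_mul _).add (integrable_const _)) fun y ↦ ?_
        rw [Real.norm_eq_abs]
        have hxy : φ (x, y) = m x / ↑v * y - m x ^ 2 / (2 * ↑v) := by
          show m x * y / ↑v - _ = _
          ring
        rw [hxy, sub_eq_add_neg]
        refine (abs_add_le _ _).trans ?_
        rw [abs_mul, abs_neg, abs_of_nonneg (by positivity : (0:ℝ) ≤ m x ^ 2 / (2 * ↑v))]
      have step2 : ∫ y, (|m x / ↑v| * |y| + m x ^ 2 / (2 * ↑v)) ∂(κ x)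
          = |m x / ↑v| * (∫ y, |y| ∂(κ x)) + m x ^ 2 / (2 * ↑v) := by
        rw [integral_add ((habsint x).const_mul _) (integrable_const _), integral_const_mul,
          integral_const, hκ x, probReal_univ]
        simp
      have step3 : |m x / ↑v| * (∫ y, |y| ∂(κ x)) + m x ^ 2 / (2 * ↑v)
          ≤ |m x / ↑v| * (A0 + |m x|) + m x ^ 2 / (2 * ↑v) := by
        have := habsmom x
        gcongr
      refine ((step1.trans (step2.le)).trans step3).trans (le_of_eq ?_)
      have e1 : |m x / ↑v| = |l| * |z x| / ↑v := by
        rw [show m x = l * z x from rfl, abs_div, abs_mul, abs_of_pos hv']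
      have e2 : |m x| = |l| * |z x| := by
        rw [show m x = l * z x from rfl, abs_mul]
      have e3 : m x ^ 2 = l ^ 2 * |z x| ^ 2 := by
        rw [show m x = l * z x from rfl, mul_pow, sq_abs]
      rw [e1, e2, e3, ← sq_abs l]
      field_simp
  have hφiP : ∫ p, φ p ∂P = l ^ 2 / (2 * ↑v) * ∫ x, z x ^ 2 ∂μ := by
    rw [hP, Measure.integral_compProd (hP ▸ hφint)]
    rw [integral_congr_ae (ae_of_all _ fun x ↦ hinner_val x)]
    rw [show (fun x ↦ m x ^ 2 / (2 * (v:ℝ))) = fun x ↦ l ^ 2 / (2 * ↑v) * z x ^ 2 by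
      funext x; show (l * z x) ^ 2 / _ = _; ring]
    exact integral_const_mul _ _
  -- the W = log density of M part
  set W : X × ℝ → ℝ := fun p ↦ Real.log (G p.2).toReal with hW_def
  have hWmeas : Measurable W := (Real.measurable_log.comp
    (hG.ennreal_toReal)).comp measurable_snd
  have hmap : P.map Prod.snd = M := rfl
  have hexp1 : Integrable (fun p ↦ rexp (- llr P (μ.prod M) p)) P :=
    (Measure.integrable_toReal_rnDeriv (μ := μ.prod M) (ν := P)).congr (exp_neg_llr hPM).symm
  have hexp2M : Integrable (fun y ↦ rexp (- llr M ν y)) M :=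
    (Measure.integrable_toReal_rnDeriv (μ := ν) (ν := M)).congr (exp_neg_llr hMν).symm
  have hexp2val : ∫ y, rexp (- llr M ν y) ∂M ≤ 1 := by
    rw [integral_congr_ae (exp_neg_llr hMν)]
    have hle := Measure.setIntegral_toReal_rnDeriv_le (μ := ν) (ν := M) (s := Set.univ)
      (measure_ne_top ν Set.univ)
    rw [setIntegral_univ] at hle
    simpa using hle
  have hMrnν : M.rnDeriv ν =ᵐ[ν] G := hMG ▸ Measure.rnDeriv_withDensity ν hG
  have hllrM : llr M ν =ᵐ[M] fun y ↦ Real.log (G y).toReal := by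
    filter_upwards [hMν.ae_eq hMrnν] with y hy
    rw [llr, hy]
  have hWP : (fun p ↦ llr M ν p.2) =ᵐ[P] W := by
    have := ae_of_ae_map (measurable_snd.aemeasurable (μ := P)) (hmap ▸ hllrM)
    filter_upwards [this] with p hp using hp
  have hexpWP : Integrable (fun p ↦ rexp (- W p)) P := by
    have hint2 : Integrable (fun p ↦ rexp (- llr M ν p.2)) P := by
      have hmble : AEStronglyMeasurable (fun y ↦ rexp (- llr M ν y)) (P.map Prod.snd) :=
        ((measurable_llr M ν).neg.exp).aestronglyMeasurable
      have := (integrable_map_measure hmble measurable_snd.aemeasurable).mp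
        (hmap ▸ hexp2M)
      exact this
    refine hint2.congr ?_
    filter_upwards [hWP] with p hp
    rw [hp]
  have key : ∀ a b c : ℝ, a = b - c → |c| ≤ |b| + rexp (-a) + rexp (-c) := by
    intro a b c h
    rcases le_or_gt 0 c with hc | hc
    · have h1 : -a ≤ rexp (-a) := by linarith [Real.add_one_le_exp (-a)]
      have h2 : (0:ℝ) < rexp (-c) := Real.exp_pos _
      have h3 : b ≤ |b| := le_abs_self b
      rw [abs_of_nonneg hc]
      linarith
    · have h1 : -c ≤ rexp (-c) := by linarith [Real.add_one_le_exp (-c)]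
      have h2 : (0:ℝ) < rexp (-a) := Real.exp_pos _
      have h3 : (0:ℝ) ≤ |b| := abs_nonneg b
      rw [abs_of_neg hc]
      linarith
  have hWint : Integrable W P := by
    refine Integrable.mono' ((hφint.abs.add hexp1).add hexpWP)
      hWmeas.aestronglyMeasurable ?_
    filter_upwards [hllr] with p hp
    rw [Real.norm_eq_abs]
    have := key (llr P (μ.prod M) p) (φ p) (W p) hp
    simpa [Pi.add_apply] using this
  have hLint : Integrable (llr P (μ.prod M)) P := (hφint.sub hWint).congr hllr.symm
  -- Gibbs inequality : ∫ W dP ≥ 0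
  have hlogm : Measurable fun y : ℝ ↦ Real.log (G y).toReal :=
    Real.measurable_log.comp (hG.ennreal_toReal)
  have hWiM : ∫ p, W p ∂P = ∫ y, Real.log (G y).toReal ∂M := by
    rw [← hmap, integral_map measurable_snd.aemeasurable hlogm.aestronglyMeasurable]
  have hlogGM : Integrable (fun y ↦ Real.log (G y).toReal) M := by
    exact (integrable_map_measure hlogm.aestronglyMeasurable
      measurable_snd.aemeasurable).mpr hWint
  have hllrMint : Integrable (llr M ν) M := hlogGM.congr hllrM.symm
  have gibbs : (1:ℝ) ≤ (∫ y, llr M ν y ∂M) + ∫ y, rexp (- llr M ν y) ∂M := by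
    have h1 : ∫ y, (1:ℝ) ∂M = 1 := by simp
    rw [← integral_add hllrMint hexp2M, ← h1]
    refine integral_mono (integrable_const 1) (hllrMint.add hexp2M) fun y ↦ ?_
    have := Real.add_one_le_exp (-(llr M ν y))
    simp only [Pi.add_apply]
    linarith
  have hWi : 0 ≤ ∫ p, W p ∂P := by
    rw [hWiM, ← integral_congr_ae hllrM]
    linarith [hexp2val]
  -- conclusion
  have hmain : ∫ p, llr P (μ.prod M) p ∂P ≤ l ^ 2 / (2 * ↑v) * ∫ x, z x ^ 2 ∂μ := by
    rw [integral_congr_ae hllr, integral_sub hφint hWint, hφiP]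
    linarith
  unfold klDiv
  rw [if_pos ⟨hPM, hLint⟩]
  exact ENNReal.ofReal_le_ofReal hmain
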